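/- arXiv:2604.14584 — 3 statements merged into one kernel-verified Lean document; each statement's English description precedes it below -/
import Mathlib

section
/- Let R be a Noetherian F-finite commutative ring of characteristic p, let (M,C) be an F-pure q-Cartier module over R and let f ∈ R. Assume that the pair (M,f) satisfies the boundedness assumption and that M = M_{f!}. Then every α ∈ ν_f(q^∞;M) is the image in ℤ_p (under the embedding ℚ → ℚ_p) of a rational number r with −1 ≤ r < 0. -/
open Pointwise Function

/-- The set of ν-invariants of level `m`. -/
def nuLevel {R M : Type*} [CommRing R] [AddCommGroup M] [Module R M]
    (C : M → M) (f : R) (N : Set M) (m : ℕ) : Set ℕ :=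
  {n | C^[m] '' (f ^ n • N) ≠ C^[m] '' (f ^ (n + 1) • N)}

/-- The set of ν-invariants of infinite level. -/
def nuInfinite {R M : Type*} [CommRing R] [AddCommGroup M] [Module R M]
    (p : ℕ) [Fact p.Prime] (q : ℕ) (C : M → M) (f : R) (N : Set M) : Set ℤ_[p] :=
  {α | ∀ m : ℕ, 1 ≤ m → ∃ n ∈ nuLevel C f N m, ((q : ℤ_[p]) ^ m) ∣ (α - (n : ℤ_[p]))}

/-- The submodule `M_{f!} = Σ_{m ≥ 0} C^m (f M)` of an F-pure `q`-Cartier module `(M, C)`. -/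
def Mfbang {R M : Type*} [CommRing R] [AddCommGroup M] [Module R M]
    (C : M → M) (f : R) : Submodule R M :=
  ⨆ m : ℕ, Submodule.span R (C^[m] '' (f • (Set.univ : Set M)))

/-!
Write `ν_m` for the ν-invariants of level `m`. The identity `C(f^{nq} M) = f^n M` shows that
`t ∈ ν_k` if and only if some `t q + b` with `0 ≤ b < q` lies in `ν_{k+1}`, so the sets
`ν_m ∩ [0, q^m)` form a tree under `n ↦ ⌊n / q⌋`. By the boundedness assumption their sizes are
eventually constant, after which the tree no longer branches. Since
`C^m(f^{n + q^m} M) = f C^m(f^n M)`, the set `ν_m` is stable under reduction mod `q^m`; so if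
`α ∈ ν_f(q^∞; M)`, then `α mod q^m ∈ ν_m`, and the same holds for every tail
`(α - (α mod q^j)) / q^j` of `α`. As distinct tails are separated at high levels, there are at
most `L` of them: the `q`-adic digits of `α` are eventually periodic, and since the tree does not
branch at high levels they are purely periodic, say with period `s`. Hence `α = -c / (q^s - 1)`
with `0 ≤ c < q^s`, and `c ≠ 0` because `M = M_{f!}` forces `0 ∉ ν_m` for large `m`.
-/

open Set Filter

theorem Antitone.eq_add_iff_forall {α : Type*} [PartialOrder α] {g : ℕ → α} (hg : Antitone g)
    (a l : ℕ) : g a = g (a + l) ↔ ∀ b < l, g (a + b) = g (a + b + 1) := by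
  refine ⟨fun h b hb => le_antisymm ?_ (hg (by omega)), fun h => ?_⟩
  · calc g (a + b) ≤ g a := hg (by omega)
      _ = g (a + l) := h
      _ ≤ g (a + b + 1) := hg (by omega)
  · induction l with
    | zero => rfl
    | succ l ih => rw [ih fun b hb => h b (by omega), h l (by omega), add_assoc]

theorem Nat.mul_add_lt_pow_succ {q m t b : ℕ} (ht : t < q ^ m) (hb : b < q) :
    t * q + b < q ^ (m + 1) :=
  calc t * q + b < (t + 1) * q := by rw [add_one_mul]; omega
    _ ≤ q ^ m * q := Nat.mul_le_mul_right q ht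
    _ = q ^ (m + 1) := (pow_succ q m).symm

theorem Nat.mul_add_div_of_lt {q t b : ℕ} (hb : b < q) : (t * q + b) / q = t := by
  rw [mul_comm, Nat.mul_add_div (by omega), Nat.div_eq_of_lt hb, add_zero]

section CartierModule

variable {R M : Type*} [CommRing R] [AddCommGroup M] [Module R M] {C : M → M} {q : ℕ}

variable (C) in
def cartierImage (f : R) (m n : ℕ) : Set M := C^[m] '' (f ^ n • univ)

theorem mem_nuLevel_univ_iff {f : R} {m n : ℕ} :
    n ∈ nuLevel C f univ m ↔ cartierImage C f m n ≠ cartierImage C f m (n + 1) := Iff.rfl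

variable (C) in
theorem cartierImage_antitone (f : R) (m : ℕ) : Antitone (cartierImage C f m) := by
  refine antitone_nat_of_succ_le fun n => Set.image_mono ?_
  rw [pow_succ, mul_smul]
  exact Set.smul_set_mono (subset_univ _)

theorem cartierImage_zero (hFpure : Surjective C) (f : R) (m : ℕ) :
    cartierImage C f m 0 = univ := by
  rw [cartierImage, pow_zero, one_smul, image_univ, (hFpure.iterate m).range_eq]

variable (hCsl : ∀ (a : R) (x : M), C (a ^ q • x) = a • C x)
include hCsl

theorem iterate_pow_smul (m : ℕ) (a : R) (x : M) : C^[m] (a ^ q ^ m • x) = a • C^[m] x := by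
  induction m generalizing a with
  | zero => simp
  | succ m ih => rw [pow_succ', pow_mul, iterate_succ_apply', ih, hCsl, iterate_succ_apply']

theorem image_iterate_pow_smul (m : ℕ) (a : R) (s : Set M) :
    C^[m] '' (a ^ q ^ m • s) = a • C^[m] '' s :=
  Set.image_comm (iterate_pow_smul hCsl m a)

theorem cartierImage_succ_mul (hFpure : Surjective C) (f : R) (k n : ℕ) :
    cartierImage C f (k + 1) (n * q) = cartierImage C f k n := by
  have h : C '' ((f ^ n) ^ q • univ) = f ^ n • univ :=
    calc C '' ((f ^ n) ^ q • univ) = f ^ n • C '' univ := Set.image_comm (hCsl (f ^ n))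
      _ = f ^ n • univ := by rw [image_univ, hFpure.range_eq]
  rw [cartierImage, cartierImage, iterate_succ, image_comp, pow_mul, h]

theorem cartierImage_add_pow (f : R) (m n : ℕ) :
    cartierImage C f m (n + q ^ m) = f • cartierImage C f m n := by
  rw [cartierImage, cartierImage, pow_add, mul_comm, mul_smul, image_iterate_pow_smul hCsl]

theorem mem_nuLevel_iff_exists_digit (hFpure : Surjective C) (f : R) (k t : ℕ) :
    t ∈ nuLevel C f univ k ↔ ∃ b < q, t * q + b ∈ nuLevel C f univ (k + 1) := by
  have h := (cartierImage_antitone C f (k + 1)).eq_add_iff_forall (t * q) q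
  rw [← add_one_mul, cartierImage_succ_mul hCsl hFpure, cartierImage_succ_mul hCsl hFpure] at h
  simp only [mem_nuLevel_univ_iff, Ne, h, not_forall, exists_prop]

theorem mem_nuLevel_of_add_pow_mem {f : R} {m n : ℕ} (h : n + q ^ m ∈ nuLevel C f univ m) :
    n ∈ nuLevel C f univ m := by
  rw [mem_nuLevel_univ_iff] at h ⊢
  contrapose! h
  rw [add_right_comm, cartierImage_add_pow hCsl, cartierImage_add_pow hCsl, h]

theorem mod_mem_nuLevel {f : R} {m n : ℕ} (h : n ∈ nuLevel C f univ m) :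
    n % q ^ m ∈ nuLevel C f univ m := by
  have hreduce : ∀ c, n % q ^ m + q ^ m * c ∈ nuLevel C f univ m → n % q ^ m ∈ nuLevel C f univ m := by
    intro c
    induction c with
    | zero => exact id
    | succ c ih =>
      rw [mul_add_one, ← add_assoc]
      exact fun hc => ih (mem_nuLevel_of_add_pow_mem hCsl hc)
  exact hreduce (n / q ^ m) ((Nat.mod_add_div n (q ^ m)).symm ▸ h)

def cartierImageSubmodule (hCadd : ∀ x y : M, C (x + y) = C x + C y) (f : R) (m : ℕ) :
    Submodule R M where
  carrier := C^[m] '' (f • univ)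
  zero_mem' :=
    ⟨0, Set.mem_smul_set.2 ⟨0, trivial, smul_zero f⟩, iterate_map_zero (AddMonoidHom.mk' C hCadd) m⟩
  add_mem' := by
    rintro _ _ ⟨_, ⟨x, -, rfl⟩, rfl⟩ ⟨_, ⟨y, -, rfl⟩, rfl⟩
    exact ⟨f • (x + y), ⟨x + y, trivial, rfl⟩,
      by rw [smul_add]; exact iterate_map_add (AddMonoidHom.mk' C hCadd) m _ _⟩
  smul_mem' := by
    rintro a _ ⟨_, ⟨x, -, rfl⟩, rfl⟩
    exact ⟨f • a ^ q ^ m • x, ⟨_, trivial, rfl⟩, by rw [smul_comm, iterate_pow_smul hCsl]⟩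

theorem cartierImageSubmodule_mono (hCadd : ∀ x y : M, C (x + y) = C x + C y)
    (hFpure : Surjective C) (hq : 1 ≤ q) (f : R) :
    Monotone (cartierImageSubmodule hCsl hCadd f) := by
  refine monotone_nat_of_le_succ fun m => ?_
  rintro _ ⟨_, ⟨x, -, rfl⟩, rfl⟩
  obtain ⟨w, rfl⟩ := hFpure x
  refine ⟨f • f ^ (q - 1) • w, ⟨_, trivial, rfl⟩, ?_⟩
  rw [iterate_succ_apply, smul_smul, ← pow_succ', Nat.sub_add_cancel hq, hCsl]

theorem exists_zero_notMem_nuLevel [Module.Finite R M]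
    (hCadd : ∀ x y : M, C (x + y) = C x + C y) (hFpure : Surjective C) (hq : 1 ≤ q) {f : R}
    (hMf : Mfbang C f = ⊤) : ∃ m₀, ∀ m ≥ m₀, 0 ∉ nuLevel C f univ m := by
  let N : ℕ →o Submodule R M :=
    ⟨cartierImageSubmodule hCsl hCadd f, cartierImageSubmodule_mono hCsl hCadd hFpure hq f⟩
  have hN : iSup N = ⊤ := by
    rw [← hMf, Mfbang]
    exact iSup_congr fun m => (Submodule.span_eq (cartierImageSubmodule hCsl hCadd f m)).symm
  obtain ⟨m₀, hm₀⟩ := Module.Finite.fg_top.stabilizes_of_iSup_eq N hN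
  refine ⟨m₀, fun m hm => ?_⟩
  have htop : cartierImageSubmodule hCsl hCadd f m = ⊤ := top_le_iff.mp (hm₀.le.trans (N.mono hm))
  rw [mem_nuLevel_univ_iff, not_not, cartierImage_zero hFpure, zero_add, cartierImage, pow_one]
  exact (Submodule.coe_eq_univ.mpr htop).symm

end CartierModule

section DigitTree

variable {ν : ℕ → Set ℕ} {q : ℕ}

def nuBelow (ν : ℕ → Set ℕ) (q m : ℕ) : Set ℕ := {n | n < q ^ m ∧ n ∈ ν m}

theorem nuBelow_finite (m : ℕ) : (nuBelow ν q m).Finite :=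
  (Set.finite_Iio (q ^ m)).subset fun _ hn => hn.1

variable (hν : ∀ k t, t ∈ ν k ↔ ∃ b < q, t * q + b ∈ ν (k + 1))
include hν

theorem image_div_nuBelow (hq : 0 < q) (m : ℕ) :
    (· / q) '' nuBelow ν q (m + 1) = nuBelow ν q m := by
  apply Subset.antisymm
  · rintro _ ⟨n, ⟨hn, hnν⟩, rfl⟩
    refine ⟨by rwa [Nat.div_lt_iff_lt_mul hq, ← pow_succ], (hν m _).2 ⟨n % q, Nat.mod_lt n hq, ?_⟩⟩
    rwa [Nat.div_add_mod']
  · rintro t ⟨ht, htν⟩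
    obtain ⟨b, hb, hbν⟩ := (hν m t).1 htν
    exact ⟨t * q + b, ⟨Nat.mul_add_lt_pow_succ ht hb, hbν⟩, Nat.mul_add_div_of_lt hb⟩

theorem exists_injOn_div_nuBelow (hq : 0 < q)
    (hbound : ∃ L : ℕ, ∀ m : ℕ, 1 ≤ m → (nuBelow ν q m).ncard ≤ L) :
    ∃ K, ∀ m ≥ K, InjOn (· / q) (nuBelow ν q (m + 1)) := by
  obtain ⟨L, hL⟩ := hbound
  set g : ℕ → ℕ := fun m => (nuBelow ν q m).ncard
  have hg_succ (m : ℕ) : (nuBelow ν q m).ncard ≤ g (m + 1) := by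
    rw [← image_div_nuBelow hν hq m]
    exact ncard_image_le (nuBelow_finite _)
  have hg_mono : Monotone g := monotone_nat_of_le_succ hg_succ
  have hg_bdd : BddAbove (range g) :=
    ⟨L, by rintro _ ⟨m, rfl⟩; exact (hg_mono (Nat.le_succ m)).trans (hL _ (Nat.le_add_left 1 m))⟩
  obtain ⟨K, hK⟩ := Nat.sSup_mem (range_nonempty g) hg_bdd
  refine ⟨K, fun m hm => injOn_of_ncard_image_eq ?_ (nuBelow_finite _)⟩
  rw [image_div_nuBelow hν hq m]
  refine le_antisymm (hg_succ m) ?_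
  calc g (m + 1) ≤ g K := hK ▸ le_csSup hg_bdd ⟨m + 1, rfl⟩
    _ ≤ g m := hg_mono hm

end DigitTree

namespace PadicInt

variable {p : ℕ} [Fact p.Prime] (e : ℕ)

noncomputable def qAppr (m : ℕ) (x : ℤ_[p]) : ℕ := x.appr (e * m)

theorem qAppr_lt (m : ℕ) (x : ℤ_[p]) : qAppr e m x < (p ^ e) ^ m := by
  rw [← pow_mul]
  exact appr_lt x (e * m)

theorem dvd_sub_qAppr (m : ℕ) (x : ℤ_[p]) : ((p ^ e : ℕ) : ℤ_[p]) ^ m ∣ x - qAppr e m x := by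
  rw [Nat.cast_pow, ← pow_mul, ← Ideal.mem_span_singleton]
  exact appr_spec (e * m) x

theorem qAppr_eq_mod_of_dvd {m n : ℕ} {x : ℤ_[p]} (h : ((p ^ e : ℕ) : ℤ_[p]) ^ m ∣ x - n) :
    qAppr e m x = n % (p ^ e) ^ m := by
  have hdvd : ((p : ℤ_[p])) ^ (e * m) ∣ (((n : ℤ) - qAppr e m x : ℤ) : ℤ_[p]) := by
    have := dvd_sub (dvd_sub_qAppr e m x) h
    rw [sub_sub_sub_cancel_left, Nat.cast_pow, ← pow_mul] at this
    exact_mod_cast this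
  rw [pow_p_dvd_int_iff, ← Nat.cast_pow, ← Nat.modEq_iff_dvd, pow_mul] at hdvd
  rw [← Nat.mod_eq_of_lt (qAppr_lt e m x)]
  exact hdvd

theorem qAppr_zero (m : ℕ) : qAppr e m (0 : ℤ_[p]) = 0 := by
  simpa using qAppr_eq_mod_of_dvd e (m := m) (n := 0) (x := 0) (by simp)

theorem eventually_qAppr_ne (he : 1 ≤ e) {x y : ℤ_[p]} (hxy : x ≠ y) :
    ∀ᶠ m in atTop, qAppr e m x ≠ qAppr e m y := by
  filter_upwards [eventually_gt_atTop (x - y).valuation] with m hm heq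
  have hdvd : ((p ^ e : ℕ) : ℤ_[p]) ^ m ∣ x - y := by
    have := dvd_sub (dvd_sub_qAppr e m x) (dvd_sub_qAppr e m y)
    rwa [heq, sub_sub_sub_cancel_right] at this
  rw [Nat.cast_pow, ← pow_mul, ← Ideal.mem_span_singleton,
    mem_span_pow_iff_le_valuation _ (sub_ne_zero.2 hxy)] at hdvd
  nlinarith

theorem eventually_injOn_qAppr (he : 1 ≤ e) (F : Finset ℤ_[p]) :
    ∀ᶠ m in atTop, InjOn (qAppr e m) (F : Set ℤ_[p]) := by
  have h : ∀ x ∈ F, ∀ y ∈ F, ∀ᶠ m in atTop, x ≠ y → qAppr e m x ≠ qAppr e m y :=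
    fun x _ y _ => by
      by_cases hxy : x = y
      · exact Eventually.of_forall fun _ hne => absurd hxy hne
      · exact (eventually_qAppr_ne e he hxy).mono fun _ hm _ => hm
  filter_upwards [(eventually_all_finset F).2 fun x hx => (eventually_all_finset F).2 (h x hx)]
    with m hm x hx y hy hxy
  by_contra hne
  exact hm x hx y hy hne hxy

theorem finite_of_ncard_image_qAppr_le (he : 1 ≤ e) {S : Set ℤ_[p]} {L : ℕ}
    (hS : ∀ m, 1 ≤ m → (qAppr e m '' S).ncard ≤ L) : S.Finite := by
  by_contra hinf
  obtain ⟨F, hFS, hF⟩ := Set.Infinite.exists_subset_card_eq hinf (L + 1)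
  obtain ⟨m, hinj, hm⟩ := ((eventually_injOn_qAppr e he F).and (eventually_ge_atTop 1)).exists
  have himage : (qAppr e m '' S).Finite :=
    (Set.finite_Iio ((p ^ e) ^ m)).subset (image_subset_iff.2 fun x _ => qAppr_lt e m x)
  have := calc L + 1 = (qAppr e m '' F).ncard := by rw [hinj.ncard_image, ncard_coe_finset, hF]
    _ ≤ (qAppr e m '' S).ncard := ncard_le_ncard (image_mono hFS) himage
    _ ≤ L := hS m hm
  omega

noncomputable def qShift (x : ℤ_[p]) : ℤ_[p] := (dvd_sub_qAppr e 1 x).choose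

theorem eq_mul_qShift_add_qAppr (x : ℤ_[p]) :
    x = ((p ^ e : ℕ) : ℤ_[p]) * qShift e x + qAppr e 1 x := by
  have h : x - qAppr e 1 x = ((p ^ e : ℕ) : ℤ_[p]) ^ 1 * qShift e x :=
    (dvd_sub_qAppr e 1 x).choose_spec
  linear_combination h

theorem qAppr_succ (m : ℕ) (x : ℤ_[p]) :
    qAppr e (m + 1) x = qAppr e m (qShift e x) * p ^ e + qAppr e 1 x := by
  have hlt := Nat.mul_add_lt_pow_succ (qAppr_lt e m (qShift e x)) (pow_one (p ^ e) ▸ qAppr_lt e 1 x)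
  rw [qAppr_eq_mod_of_dvd e (x := x), Nat.mod_eq_of_lt hlt]
  have hx : x - ↑(qAppr e m (qShift e x) * p ^ e + qAppr e 1 x) =
      ((p ^ e : ℕ) : ℤ_[p]) * (qShift e x - qAppr e m (qShift e x)) := by
    have h := eq_mul_qShift_add_qAppr e x
    push_cast at h ⊢
    linear_combination h
  rw [hx, pow_succ']
  exact mul_dvd_mul_left _ (dvd_sub_qAppr e m (qShift e x))

theorem qAppr_succ_div (m : ℕ) (x : ℤ_[p]) :
    qAppr e (m + 1) x / p ^ e = qAppr e m (qShift e x) := by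
  rw [qAppr_succ, Nat.mul_add_div_of_lt (pow_one (p ^ e) ▸ qAppr_lt e 1 x)]

theorem eq_of_qShift_eq {x y : ℤ_[p]} (hshift : qShift e x = qShift e y)
    (happr : qAppr e 1 x = qAppr e 1 y) : x = y := by
  rw [eq_mul_qShift_add_qAppr e x, eq_mul_qShift_add_qAppr e y, hshift, happr]

theorem eq_pow_mul_qShift_iterate_add_qAppr (j : ℕ) (x : ℤ_[p]) :
    x = ((p ^ e : ℕ) : ℤ_[p]) ^ j * (qShift e)^[j] x + qAppr e j x := by
  induction j generalizing x with
  | zero => simp [qAppr, appr]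
  | succ j ih =>
    rw [iterate_succ_apply, qAppr_succ]
    have h1 := eq_mul_qShift_add_qAppr e x
    have h2 := ih (qShift e x)
    push_cast at h1 h2 ⊢
    linear_combination h1 + (p : ℤ_[p]) ^ e * h2

theorem exists_rat_of_qShift_iterate_eq (he : 1 ≤ e) {s : ℕ} (hs : 0 < s) {x : ℤ_[p]}
    (hx : x ≠ 0) (hper : (qShift e)^[s] x = x) :
    ∃ r : ℚ, -1 ≤ r ∧ r < 0 ∧ (x : ℚ_[p]) = r := by
  set c := qAppr e s x
  set Q := (p ^ e) ^ s
  have hQ : 2 ≤ Q := calc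
    2 ≤ p := (Fact.out : p.Prime).two_le
    _ ≤ p ^ (e * s) := Nat.le_self_pow (Nat.mul_ne_zero (by omega) (by omega)) p
    _ = Q := pow_mul p e s
  have hcQ : c < Q := qAppr_lt e s x
  have hfix : (x : ℚ_[p]) = Q * x + c := by
    have h := eq_pow_mul_qShift_iterate_add_qAppr e s x
    rw [hper] at h
    exact_mod_cast congrArg ((↑) : ℤ_[p] → ℚ_[p]) h
  have hQ1 : (Q : ℚ_[p]) - 1 ≠ 0 := by
    rw [sub_ne_zero]
    exact_mod_cast (by omega : Q ≠ 1)
  have hc : 0 < c := by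
    refine Nat.pos_of_ne_zero fun hc0 => hx ?_
    rw [hc0, Nat.cast_zero, add_zero] at hfix
    exact PadicInt.coe_eq_zero.1
      ((mul_eq_zero.1 (by linear_combination -hfix : ((Q : ℚ_[p]) - 1) * x = 0)).resolve_left hQ1)
  have hQpos : (0 : ℚ) < Q - 1 := by
    rw [sub_pos]
    exact_mod_cast (by omega : 1 < Q)
  refine ⟨-c / (Q - 1), ?_, ?_, ?_⟩
  · rw [le_div_iff₀ hQpos, neg_one_mul, neg_le_neg_iff, le_sub_iff_add_le]
    exact_mod_cast hcQ
  · exact div_neg_of_neg_of_pos (by exact_mod_cast (by omega : -(c : ℤ) < 0)) hQpos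
  · push_cast
    rw [eq_div_iff hQ1]
    linear_combination -hfix

end PadicInt

section Assembly

open PadicInt

variable {p : ℕ} [Fact p.Prime] {e : ℕ} {ν : ℕ → Set ℕ}
  (hν : ∀ k t, t ∈ ν k ↔ ∃ b < p ^ e, t * p ^ e + b ∈ ν (k + 1))
include hν

theorem qAppr_qShift_iterate_mem {x : ℤ_[p]} (hx : ∀ m, 1 ≤ m → qAppr e m x ∈ ν m) (j : ℕ) :
    ∀ m, 1 ≤ m → qAppr e m ((qShift e)^[j] x) ∈ ν m := by
  induction j generalizing x with
  | zero => exact hx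
  | succ j ih =>
    refine ih fun m _ => (hν m _).2 ⟨_, pow_one (p ^ e) ▸ qAppr_lt e 1 x, ?_⟩
    rw [← qAppr_succ]
    exact hx (m + 1) (Nat.le_add_left 1 m)

variable (hbound : ∃ L : ℕ, ∀ m : ℕ, 1 ≤ m → (nuBelow ν (p ^ e) m).ncard ≤ L)
include hbound

theorem eq_of_qShift_eq_of_qAppr_mem {x y : ℤ_[p]} (hx : ∀ m, 1 ≤ m → qAppr e m x ∈ ν m)
    (hy : ∀ m, 1 ≤ m → qAppr e m y ∈ ν m) (hxy : qShift e x = qShift e y) : x = y := by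
  have hq : 0 < p ^ e := pow_pos (Fact.out : p.Prime).pos e
  obtain ⟨K, hK⟩ := exists_injOn_div_nuBelow hν hq hbound
  have hmem (z : ℤ_[p]) (hz : ∀ m, 1 ≤ m → qAppr e m z ∈ ν m) :
      qAppr e (K + 1 + 1) z ∈ nuBelow ν (p ^ e) (K + 1 + 1) :=
    ⟨qAppr_lt e _ z, hz _ (by omega)⟩
  have happr := hK (K + 1) (by omega) (hmem x hx) (hmem y hy)
    (by simp only [qAppr_succ_div, hxy])
  rw [qAppr_succ e _ x, qAppr_succ e _ y, hxy, Nat.add_left_cancel_iff] at happr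
  exact eq_of_qShift_eq e hxy happr

theorem exists_qShift_iterate_eq_self (he : 1 ≤ e) {α : ℤ_[p]}
    (hα : ∀ m, 1 ≤ m → qAppr e m α ∈ ν m) :
    ∃ s, 0 < s ∧ (qShift e)^[s] α = α := by
  have htail := qAppr_qShift_iterate_mem hν hα
  obtain ⟨L, hL⟩ := hbound
  have hfin : (range fun j => (qShift e)^[j] α).Finite := by
    refine finite_of_ncard_image_qAppr_le e he fun m hm => le_trans (ncard_le_ncard ?_
      (nuBelow_finite m)) (hL m hm)
    rintro _ ⟨_, ⟨j, rfl⟩, rfl⟩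
    exact ⟨qAppr_lt e m _, htail j m hm⟩
  obtain ⟨a, b, hab, hper⟩ := hfin.exists_lt_map_eq_of_forall_mem fun j => mem_range_self j
  obtain ⟨s, rfl⟩ := Nat.exists_eq_add_of_lt hab
  refine ⟨s + 1, s.succ_pos, ?_⟩
  clear hab
  induction a with
  | zero => simpa using hper.symm
  | succ a ih =>
    refine ih (eq_of_qShift_eq_of_qAppr_mem hν ⟨L, hL⟩ (htail a) (htail _) ?_)
    simpa only [← iterate_succ_apply', add_right_comm a 1 s] using hper

theorem exists_rat_of_qAppr_mem (he : 1 ≤ e) (hzero : ∃ m₀, ∀ m ≥ m₀, 0 ∉ ν m) {α : ℤ_[p]}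
    (hα : ∀ m, 1 ≤ m → qAppr e m α ∈ ν m) :
    ∃ r : ℚ, -1 ≤ r ∧ r < 0 ∧ (α : ℚ_[p]) = r := by
  obtain ⟨s, hs, hper⟩ := exists_qShift_iterate_eq_self hν hbound he hα
  refine exists_rat_of_qShift_iterate_eq e he hs ?_ hper
  rintro rfl
  obtain ⟨m₀, hm₀⟩ := hzero
  have h0 := hα (m₀ + 1) (Nat.le_add_left 1 m₀)
  rw [qAppr_zero] at h0
  exact hm₀ (m₀ + 1) (Nat.le_succ m₀) h0

end Assembly

theorem stmt17_general {R M : Type*} [CommRing R] [AddCommGroup M] [Module R M]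
    (p : ℕ) [Fact p.Prime]
    (e q : ℕ) (he : 1 ≤ e) (hq : q = p ^ e)
    (C : M → M) (hCadd : ∀ x y : M, C (x + y) = C x + C y)
    (hCsl : ∀ (a : R) (x : M), C (a ^ q • x) = a • C x)
    [Module.Finite R M] (hFpure : Function.Surjective C) (f : R)
    (hbound : ∃ L : ℕ, ∀ m : ℕ, 1 ≤ m →
      {n : ℕ | n < q ^ m ∧ n ∈ nuLevel C f (Set.univ : Set M) m}.ncard ≤ L)
    (hMf : Mfbang C f = ⊤) :
    ∀ α ∈ nuInfinite p q C f (Set.univ : Set M),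
      ∃ r : ℚ, -1 ≤ r ∧ r < 0 ∧ (α : ℚ_[p]) = (r : ℚ_[p]) := by
  intro α hα
  subst hq
  have hq : 1 ≤ p ^ e := Nat.one_le_pow _ _ (Fact.out : p.Prime).pos
  refine exists_rat_of_qAppr_mem (mem_nuLevel_iff_exists_digit hCsl hFpure f) hbound he
    (exists_zero_notMem_nuLevel hCsl hCadd hFpure hq hMf) fun m hm => ?_
  obtain ⟨n, hn, hdvd⟩ := hα m hm
  rw [PadicInt.qAppr_eq_mod_of_dvd e hdvd]
  exact mod_mem_nuLevel hCsl hn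

theorem stmt17 {R M : Type*} [CommRing R] [AddCommGroup M] [Module R M]
    (p : ℕ) [Fact p.Prime] [CharP R p] [IsNoetherianRing R]
    (hFF : (frobenius R p).Finite)
    (e q : ℕ) (he : 1 ≤ e) (hq : q = p ^ e)
    (C : M → M) (hCadd : ∀ x y : M, C (x + y) = C x + C y)
    (hCsl : ∀ (a : R) (x : M), C (a ^ q • x) = a • C x)
    [Module.Finite R M] (hFpure : Function.Surjective C) (f : R)
    (hbound : ∃ L : ℕ, ∀ m : ℕ, 1 ≤ m →
      {n : ℕ | n < q ^ m ∧ n ∈ nuLevel C f (Set.univ : Set M) m}.ncard ≤ L)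
    (hMf : Mfbang C f = ⊤) :
    ∀ α ∈ nuInfinite p q C f (Set.univ : Set M),
      ∃ r : ℚ, -1 ≤ r ∧ r < 0 ∧ (α : ℚ_[p]) = (r : ℚ_[p]) :=
  stmt17_general p e q he hq C hCadd hCsl hFpure f hbound hMf
end

section
/- Let p be a prime, let m ≥ 1 be an integer and let n be an integer with 0 ≤ n ≤ p^m − 1. Then in the polynomial ring 𝔽_p[x,y] one has the identity (x − y)^{p^m − n − 1} = (−1)^n · Σ_{r=0}^{p^m − n − 1} C(n+r, n) · x^r · y^{p^m − n − r − 1}, where C(n+r, n) denotes the binomial coefficient reduced modulo p. -/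
open MvPolynomial

lemma key18 (p : ℕ) [Fact p.Prime] (m : ℕ) :
    ∀ s n r : ℕ, n + r = s → n + r ≤ p ^ m - 1 →
      (((p ^ m - 1 - n).choose r : ℕ) : ZMod p) =
        (-1) ^ r * (((n + r).choose n : ℕ) : ZMod p) := by
  intro s
  induction s with
  | zero =>
    intro n r h _
    obtain ⟨rfl, rfl⟩ : n = 0 ∧ r = 0 := by omega
    simp
  | succ s ih =>
    intro n r hs hle
    have hq1 : 1 ≤ p ^ m := Nat.one_le_pow _ _ (Fact.out (p := p.Prime)).pos
    rcases r with _ | r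
    · simp
    rcases n with _ | n
    · -- n = 0
      have hpas := Nat.choose_succ_succ (p ^ m - 1) r
      simp only [Nat.succ_eq_add_one] at hpas
      rw [show p ^ m - 1 + 1 = p ^ m by omega] at hpas
      have hdvd : (p : ℕ) ∣ (p ^ m).choose (r + 1) :=
        Nat.Prime.dvd_choose_pow (Fact.out) (by omega) (by omega)
      have h0 : (((p ^ m).choose (r + 1) : ℕ) : ZMod p) = 0 :=
        (ZMod.natCast_eq_zero_iff _ _).mpr hdvd
      have hih := ih 0 r (by omega) (by omega)
      have hcast := congrArg (fun x : ℕ => (x : ZMod p)) hpas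
      push_cast at hcast hih ⊢
      simp only [Nat.sub_zero] at hih ⊢
      rw [h0] at hcast
      simp only [Nat.choose_zero_right, Nat.cast_one, mul_one] at hih ⊢
      linear_combination -hcast - hih
    · -- n+1, r+1
      have hpas := Nat.choose_succ_succ (p ^ m - 1 - (n + 1)) r
      simp only [Nat.succ_eq_add_one] at hpas
      rw [show p ^ m - 1 - (n + 1) + 1 = p ^ m - 1 - n by omega] at hpas
      have h1 := ih n (r + 1) (by omega) (by omega)
      have h2 := ih (n + 1) r (by omega) (by omega)
      have hp2 := Nat.choose_succ_succ (n + r + 1) n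
      simp only [Nat.succ_eq_add_one] at hp2
      have hcast := congrArg (fun x : ℕ => (x : ZMod p)) hpas
      have hcast2 := congrArg (fun x : ℕ => (x : ZMod p)) hp2
      simp only [show n + (r + 1) = n + r + 1 from by omega,
        show n + 1 + r = n + r + 1 from by omega,
        show n + 1 + (r + 1) = n + r + 2 from by omega,
        show n + r + 1 + 1 = n + r + 2 from by omega] at h1 h2 hcast hcast2 ⊢
      push_cast at h1 h2 hcast hcast2 ⊢
      rw [hcast2]
      linear_combination -hcast + h1 - h2

theorem stmt18 (p : ℕ) [Fact p.Prime] (m : ℕ) (hm : 1 ≤ m)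
    (n : ℕ) (hn : n ≤ p ^ m - 1) :
    (X 0 - X 1 : MvPolynomial (Fin 2) (ZMod p)) ^ (p ^ m - n - 1) =
      (-1) ^ n *
        ∑ r ∈ Finset.range (p ^ m - n),
          (((n + r).choose n : ℕ) : MvPolynomial (Fin 2) (ZMod p)) *
            X 0 ^ r * X 1 ^ (p ^ m - n - r - 1) := by
  have hq1 : 1 ≤ p ^ m := Nat.one_le_pow _ _ (Fact.out (p := p.Prime)).pos
  set N := p ^ m - n - 1 with hN
  have hrange : p ^ m - n = N + 1 := by omega
  rw [sub_pow, hrange, Finset.mul_sum]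
  apply Finset.sum_congr rfl
  intro r hr
  rw [Finset.mem_range] at hr
  have hneg1 : ((-1 : MvPolynomial (Fin 2) (ZMod p))) ^ (p ^ m) = -1 :=
    neg_one_pow_char_pow (MvPolynomial (Fin 2) (ZMod p)) p m
  have hq : ((-1 : MvPolynomial (Fin 2) (ZMod p))) ^ (p ^ m - 1) = 1 := by
    have h1 : ((-1 : MvPolynomial (Fin 2) (ZMod p))) ^ (p ^ m - 1) * (-1) = -1 := by
      rw [← pow_succ, show p ^ m - 1 + 1 = p ^ m by omega]; exact hneg1
    have h2 := congrArg (fun x => x * (-1 : MvPolynomial (Fin 2) (ZMod p))) h1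
    simpa using h2
  have h2n : ((-1 : MvPolynomial (Fin 2) (ZMod p))) ^ n * (-1) ^ n = 1 := by
    rw [← pow_add, show n + n = 2 * n by ring, pow_mul]; simp
  have hNn : ((-1 : MvPolynomial (Fin 2) (ZMod p))) ^ N = (-1) ^ n := by
    have h3 : ((-1 : MvPolynomial (Fin 2) (ZMod p))) ^ N * (-1) ^ n = 1 := by
      rw [← pow_add, show N + n = p ^ m - 1 by omega, hq]
    calc ((-1 : MvPolynomial (Fin 2) (ZMod p))) ^ N
        = (-1) ^ N * ((-1) ^ n * (-1) ^ n) := by rw [h2n, mul_one]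
      _ = ((-1) ^ N * (-1) ^ n) * (-1) ^ n := by ring
      _ = (-1) ^ n := by rw [h3, one_mul]
  have hkey := key18 p m (n + r) n r rfl (by omega)
  rw [show p ^ m - 1 - n = N by omega] at hkey
  have hkeyC : ((N.choose r : ℕ) : MvPolynomial (Fin 2) (ZMod p))
      = (-1) ^ r * (((n + r).choose n : ℕ) : MvPolynomial (Fin 2) (ZMod p)) := by
    have := congrArg (MvPolynomial.C : ZMod p →+* MvPolynomial (Fin 2) (ZMod p)) hkey
    simpa [map_pow, map_natCast] using this
  have h2r : ((-1 : MvPolynomial (Fin 2) (ZMod p))) ^ r * (-1) ^ r = 1 := by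
    rw [← pow_add, show r + r = 2 * r by ring, pow_mul]; simp
  rw [show N + 1 - r - 1 = p ^ m - n - r - 1 by omega, show N - r = p ^ m - n - r - 1 by omega, hkeyC,
    show ((-1 : MvPolynomial (Fin 2) (ZMod p))) ^ (r + N) = (-1) ^ r * (-1) ^ n by
      rw [pow_add, hNn]]
  linear_combination ((-1 : MvPolynomial (Fin 2) (ZMod p)) ^ n * X 0 ^ r *
    X 1 ^ (p ^ m - n - r - 1) * (((n + r).choose n : ℕ) : MvPolynomial (Fin 2) (ZMod p))) * h2r
end

section
/- Let p be a prime, q = p^e with e ≥ 1, let R be a commutative ring of characteristic p, let n ≥ 1 and let A = (a_{ij}) be an invertible n×n matrix over R. Then in the quotient ring R[x_1,…,x_n]/(x_1^q,…,x_n^q) one has ∏_{i=1}^n ( Σ_{j=1}^n a_{ij} x_j )^{q−1} = det(A)^{q−1} · ∏_{i=1}^n x_i^{q−1}. -/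
open MvPolynomial

section StmtAux

variable {q : ℕ} {R : Type*} [CommRing R] {n : ℕ}

/-- The ideal generated by the `q`-th powers of the variables. -/
noncomputable def qIdeal (q : ℕ) (R : Type*) [CommRing R] (n : ℕ) :
    Ideal (MvPolynomial (Fin n) R) :=
  Ideal.span (Set.range fun i : Fin n => (X i : MvPolynomial (Fin n) R) ^ q)

noncomputable def Pmat (q : ℕ) {R : Type*} [CommRing R] {n : ℕ}
    (A : Matrix (Fin n) (Fin n) R) : MvPolynomial (Fin n) R :=
  ∏ i : Fin n, (∑ j : Fin n, C (A i j) * X j) ^ (q - 1)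

def Good (q : ℕ) {R : Type*} [CommRing R] {n : ℕ} (A : Matrix (Fin n) (Fin n) R) : Prop :=
  Pmat q A - C (A.det ^ (q - 1)) * ∏ i : Fin n, X i ^ (q - 1) ∈ qIdeal q R n

lemma mem_qIdeal_of_dvd {f : MvPolynomial (Fin n) R} {i : Fin n}
    (h : (X i : MvPolynomial (Fin n) R) ^ q ∣ f) : f ∈ qIdeal q R n := by
  obtain ⟨g, rfl⟩ := h
  exact Ideal.mul_mem_right _ _ (Ideal.subset_span ⟨i, rfl⟩)

lemma mem_qIdeal_of_support {f : MvPolynomial (Fin n) R}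
    (h : ∀ d ∈ f.support, ∃ i, q ≤ d i) : f ∈ qIdeal q R n := by
  rw [← support_sum_monomial_coeff f]
  refine Ideal.sum_mem _ fun d hd => ?_
  obtain ⟨i, hi⟩ := h d hd
  apply mem_qIdeal_of_dvd (i := i)
  refine ⟨monomial (d - Finsupp.single i q) (coeff d f), ?_⟩
  rw [X_pow_eq_monomial, monomial_mul, one_mul, add_comm,
    tsub_add_cancel_of_le (Finsupp.single_le_iff.mpr hi)]

lemma support_of_mem_qIdeal {f : MvPolynomial (Fin n) R} (hf : f ∈ qIdeal q R n) :
    ∀ d ∈ f.support, ∃ i, q ≤ d i := by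
  rw [qIdeal, Ideal.mem_span_range_iff_exists_fun] at hf
  obtain ⟨c, hc⟩ := hf
  intro d hd
  rw [← hc] at hd
  classical
  obtain ⟨i, -, hi⟩ := Finset.mem_biUnion.mp (MvPolynomial.support_sum hd)
  obtain ⟨a, ha, b, hb, hab⟩ := Finset.mem_add.mp (support_mul _ _ hi)
  have hb' : b = Finsupp.single i q := by
    have := MvPolynomial.support_monomial_subset (s := Finsupp.single i q) (a := (1 : R))
    rw [X_pow_eq_monomial] at hb
    simpa using this hb
  exact ⟨i, by simp [← hab, hb']⟩

/-- Ring homomorphisms that send the generators into the ideal preserve the ideal. -/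
lemma qIdeal_map_mem {S : Type*} [CommRing S]
    (g : MvPolynomial (Fin n) R →+* MvPolynomial (Fin n) S)
    (hg : ∀ i : Fin n, g ((X i : MvPolynomial (Fin n) R) ^ q) ∈ qIdeal q S n)
    {f : MvPolynomial (Fin n) R} (hf : f ∈ qIdeal q R n) : g f ∈ qIdeal q S n := by
  have hle : qIdeal q R n ≤ Ideal.comap g (qIdeal q S n) := by
    rw [qIdeal, Ideal.span_le]
    rintro x ⟨i, rfl⟩
    exact hg i
  exact hle hf

lemma bind_row (A B : Matrix (Fin n) (Fin n) R) (i : Fin n) :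
    (bind₁ fun j : Fin n => ∑ k : Fin n, C (B j k) * X k)
        (∑ j : Fin n, C (A i j) * X j) =
      ∑ k : Fin n, C ((A * B) i k) * X k := by
  rw [map_sum]
  simp only [map_mul, bind₁_C_right, bind₁_X_right]
  simp_rw [Finset.mul_sum]
  rw [Finset.sum_comm]
  refine Finset.sum_congr rfl fun k _ => ?_
  rw [Matrix.mul_apply, map_sum, Finset.sum_mul]
  refine Finset.sum_congr rfl fun j _ => ?_
  rw [C_mul, mul_assoc]

lemma bind_Pmat (A B : Matrix (Fin n) (Fin n) R) :
    (bind₁ fun j : Fin n => ∑ k : Fin n, C (B j k) * X k) (Pmat q A) = Pmat q (A * B) := by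
  rw [Pmat, map_prod]
  simp only [map_pow, bind_row]
  rfl

lemma bind_m (B : Matrix (Fin n) (Fin n) R) :
    (bind₁ fun j : Fin n => ∑ k : Fin n, C (B j k) * X k)
        (∏ i : Fin n, (X i : MvPolynomial (Fin n) R) ^ (q - 1)) = Pmat q B := by
  rw [map_prod, Pmat]
  simp only [map_pow, bind₁_X_right]

lemma Good.mul {p e : ℕ} [Fact p.Prime] [CharP R p] (hq : q = p ^ e)
    {A B : Matrix (Fin n) (Fin n) R} (hA : Good q A) (hB : Good q B) : Good q (A * B) := by
  classical
  set g := (bind₁ fun j : Fin n => ∑ k : Fin n, C (B j k) * X k :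
    MvPolynomial (Fin n) R →ₐ[R] MvPolynomial (Fin n) R) with hg
  have hstab : ∀ f ∈ qIdeal q R n, g f ∈ qIdeal q R n := by
    intro f hf
    refine qIdeal_map_mem (g : MvPolynomial (Fin n) R →+* MvPolynomial (Fin n) R) ?_ hf
    intro i
    show g ((X i : MvPolynomial (Fin n) R) ^ q) ∈ qIdeal q R n
    have : g ((X i : MvPolynomial (Fin n) R) ^ q) = ∑ k : Fin n, C (B i k) ^ q * X k ^ q := by
      rw [map_pow, hg]
      simp only [bind₁_X_right]
      rw [hq, sum_pow_char_pow]
      exact Finset.sum_congr rfl fun k _ => by rw [mul_pow]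
    rw [this]
    exact Ideal.sum_mem _ fun k _ =>
      Ideal.mul_mem_left _ _ (Ideal.subset_span ⟨k, rfl⟩)
  have key : Pmat q (A * B) - C (A.det ^ (q - 1)) * Pmat q B =
      g (Pmat q A - C (A.det ^ (q - 1)) * ∏ i : Fin n, X i ^ (q - 1)) := by
    rw [map_sub, map_mul, bind_Pmat, bind_m]
    congr 1
    rw [algHom_C, MvPolynomial.algebraMap_eq]
  rw [Good, Matrix.det_mul, mul_pow, C_mul]
  have expand : Pmat q (A * B) - C (A.det ^ (q - 1)) * C (B.det ^ (q - 1)) *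
      ∏ i : Fin n, (X i : MvPolynomial (Fin n) R) ^ (q - 1) =
      (Pmat q (A * B) - C (A.det ^ (q - 1)) * Pmat q B) +
        C (A.det ^ (q - 1)) *
          (Pmat q B - C (B.det ^ (q - 1)) * ∏ i : Fin n, X i ^ (q - 1)) := by
    ring
  rw [expand, key]
  exact Ideal.add_mem _ (hstab _ hA) (Ideal.mul_mem_left _ _ hB)

lemma good_diagonal (d : Fin n → R) : Good q (Matrix.diagonal d) := by
  classical
  have hrow : ∀ i : Fin n, (∑ j : Fin n, C (Matrix.diagonal d i j) * X j :
      MvPolynomial (Fin n) R) = C (d i) * X i := by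
    intro i
    rw [Finset.sum_eq_single i]
    · rw [Matrix.diagonal_apply_eq]
    · intro j _ hj
      rw [Matrix.diagonal_apply_ne' _ hj, map_zero, zero_mul]
    · simp
  have : Pmat q (Matrix.diagonal d) =
      C ((Matrix.diagonal d).det ^ (q - 1)) * ∏ i : Fin n, X i ^ (q - 1) := by
    rw [Pmat, Matrix.det_diagonal]
    simp_rw [hrow, mul_pow, ← C_pow]
    rw [Finset.prod_mul_distrib, ← map_prod, Finset.prod_pow]
  rw [Good, this, sub_self]
  exact Ideal.zero_mem _

lemma good_transvection (hq1 : 1 ≤ q) (t : Matrix.TransvectionStruct (Fin n) R) :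
    Good q t.toMatrix := by
  classical
  obtain ⟨i, j, hij, c⟩ := t
  rw [Matrix.TransvectionStruct.toMatrix_mk]
  have hdet : (Matrix.transvection i j c).det = 1 := Matrix.det_transvection_of_ne i j hij c
  rw [Good, hdet, one_pow, map_one, one_mul]
  have hrow : ∀ r : Fin n, (∑ s : Fin n, C (Matrix.transvection i j c r s) * X s :
      MvPolynomial (Fin n) R) = X r + (if r = i then C c * X j else 0) := by
    intro r
    have hentry : ∀ s, Matrix.transvection i j c r s =
        (if r = s then (1 : R) else 0) + (if r = i ∧ s = j then c else 0) := by
      intro s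
      rw [Matrix.transvection, Matrix.add_apply, Matrix.one_apply]
      congr 1
      rw [Matrix.single]
      simp [eq_comm, and_comm]
    simp_rw [hentry, map_add, add_mul, Finset.sum_add_distrib]
    congr 1
    · rw [Finset.sum_eq_single r] <;> simp +contextual [eq_comm]
    · by_cases hr : r = i
      · subst hr
        rw [Finset.sum_eq_single j, if_pos rfl] <;> simp +contextual
      · rw [if_neg hr, Finset.sum_eq_zero]
        intro s _
        simp [hr]
  rw [Pmat]
  simp_rw [hrow]
  rw [← Finset.mul_prod_erase Finset.univ _ (Finset.mem_univ i),
    ← Finset.mul_prod_erase Finset.univ (fun i => (X i : MvPolynomial (Fin n) R) ^ (q - 1))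
      (Finset.mem_univ i), if_pos rfl]
  have hrest : ∀ r ∈ Finset.univ.erase i,
      ((X r + if r = i then C c * X j else 0 : MvPolynomial (Fin n) R)) ^ (q - 1) =
        X r ^ (q - 1) := by
    intro r hr
    rw [if_neg (Finset.ne_of_mem_erase hr), add_zero]
  rw [Finset.prod_congr rfl hrest]
  set rest : MvPolynomial (Fin n) R := ∏ r ∈ Finset.univ.erase i, X r ^ (q - 1) with hrest'
  -- expand (X i + C c * X j) ^ (q-1)
  rw [add_pow, Finset.sum_range_succ]
  simp only [Nat.sub_self, pow_zero, Nat.choose_self, Nat.cast_one, mul_one]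
  rw [add_mul, add_sub_cancel_right, Finset.sum_mul]
  refine Ideal.sum_mem _ fun k hk => ?_
  have hk' : k < q - 1 := Finset.mem_range.mp hk
  -- rest contains X j ^ (q-1)
  have hjmem : j ∈ Finset.univ.erase i := Finset.mem_erase.mpr ⟨fun h => hij h.symm, Finset.mem_univ j⟩
  rw [hrest', ← Finset.mul_prod_erase _ _ hjmem]
  apply mem_qIdeal_of_dvd (i := j)
  set a := q - 1 - k with ha
  obtain ⟨b, hb⟩ : ∃ b, a + (q - 1) = q + b := ⟨a + (q - 1) - q, by omega⟩
  have key : (X j : MvPolynomial (Fin n) R) ^ a * X j ^ (q - 1) = X j ^ q * X j ^ b := by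
    rw [← pow_add, ← pow_add, hb]
  refine ⟨X j ^ b * (X i ^ k * C c ^ a * (((q-1).choose k : ℕ) : MvPolynomial (Fin n) R) *
        ∏ r ∈ (Finset.univ.erase i).erase j, X r ^ (q - 1)), ?_⟩
  calc (X i : MvPolynomial (Fin n) R) ^ k * (C c * X j) ^ a * ↑((q-1).choose k) *
        (X j ^ (q - 1) * ∏ r ∈ (Finset.univ.erase i).erase j, X r ^ (q - 1))
      = (X j ^ a * X j ^ (q - 1)) * (X i ^ k * C c ^ a * ↑((q-1).choose k) *
        ∏ r ∈ (Finset.univ.erase i).erase j, X r ^ (q - 1)) := by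
        rw [mul_pow]; ring
    _ = X j ^ q * (X j ^ b * (X i ^ k * C c ^ a * ↑((q-1).choose k) *
        ∏ r ∈ (Finset.univ.erase i).erase j, X r ^ (q - 1))) := by
        rw [key]; ring

lemma good_all_field {p e : ℕ} [Fact p.Prime] (hq : q = p ^ e)
    {K : Type*} [Field K] [CharP K p] (M : Matrix (Fin n) (Fin n) K) : Good q M := by
  classical
  refine Matrix.diagonal_transvection_induction (Good q) M
    (fun D _ => good_diagonal D) (fun t => good_transvection ?_ t)
    (fun A B hA hB => Good.mul hq hA hB)
  · rw [hq]
    exact Nat.one_le_pow _ _ (Fact.out : p.Prime).pos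

lemma Good.map {S : Type*} [CommRing S] (φ : R →+* S)
    {M : Matrix (Fin n) (Fin n) R} (h : Good q M) : Good q (M.map φ) := by
  have hmap := qIdeal_map_mem (MvPolynomial.map φ)
    (fun i => by rw [map_pow, map_X]; exact Ideal.subset_span ⟨i, rfl⟩) h
  have heq : MvPolynomial.map φ
      (Pmat q M - C (M.det ^ (q - 1)) * ∏ i : Fin n, X i ^ (q - 1)) =
      Pmat q (M.map φ) - C ((M.map φ).det ^ (q - 1)) * ∏ i : Fin n, X i ^ (q - 1) := by
    rw [map_sub, map_mul]
    congr 1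
    · rw [Pmat, map_prod, Pmat]
      refine Finset.prod_congr rfl fun i _ => ?_
      rw [map_pow, map_sum]
      refine congrArg (· ^ (q - 1)) (Finset.sum_congr rfl fun j _ => ?_)
      rw [map_mul, map_C, map_X, Matrix.map_apply]
    · congr 1
      · rw [map_C, map_pow, RingHom.map_det, RingHom.mapMatrix_apply]
      · rw [map_prod]
        exact Finset.prod_congr rfl fun i _ => by rw [map_pow, map_X]
  rwa [heq] at hmap

lemma Good.of_map_injective {S : Type*} [CommRing S] (φ : R →+* S)
    (hφ : Function.Injective φ) {M : Matrix (Fin n) (Fin n) R}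
    (h : Good q (M.map φ)) : Good q M := by
  apply mem_qIdeal_of_support
  intro d hd
  have heq : MvPolynomial.map φ
      (Pmat q M - C (M.det ^ (q - 1)) * ∏ i : Fin n, X i ^ (q - 1)) =
      Pmat q (M.map φ) - C ((M.map φ).det ^ (q - 1)) * ∏ i : Fin n, X i ^ (q - 1) := by
    rw [map_sub, map_mul]
    congr 1
    · rw [Pmat, map_prod, Pmat]
      refine Finset.prod_congr rfl fun i _ => ?_
      rw [map_pow, map_sum]
      refine congrArg (· ^ (q - 1)) (Finset.sum_congr rfl fun j _ => ?_)
      rw [map_mul, map_C, map_X, Matrix.map_apply]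
    · congr 1
      · rw [map_C, map_pow, RingHom.map_det, RingHom.mapMatrix_apply]
      · rw [map_prod]
        exact Finset.prod_congr rfl fun i _ => by rw [map_pow, map_X]
  refine support_of_mem_qIdeal h d ?_
  rw [← heq, MvPolynomial.support_map_of_injective _ hφ]
  exact hd

lemma good_all (p e : ℕ) [Fact p.Prime] (hq : q = p ^ e)
    [CharP R p] (A : Matrix (Fin n) (Fin n) R) : Good q A := by
  classical
  let R₀ := MvPolynomial (Fin n × Fin n) (ZMod p)
  let K := FractionRing R₀
  haveI : CharP R₀ p := inferInstance
  haveI : CharP K p := charP_of_injective_algebraMap (IsFractionRing.injective R₀ K) p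
  let Y : Matrix (Fin n) (Fin n) R₀ := fun i j => X (i, j)
  have hYK : Good q (Y.map (algebraMap R₀ K)) :=
    good_all_field (p := p) (e := e) hq _
  have hY : Good q Y :=
    Good.of_map_injective (algebraMap R₀ K) (IsFractionRing.injective R₀ K) hYK
  let φ : R₀ →+* R := MvPolynomial.eval₂Hom (ZMod.castHom dvd_rfl R) fun ij => A ij.1 ij.2
  have hYA : Y.map φ = A := by
    ext i j
    show φ (X (i, j)) = A i j
    exact eval₂Hom_X' _ _ _
  have := hY.map φ
  rwa [hYA] at this

end StmtAux

open MvPolynomial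


theorem stmt19 (p : ℕ) [Fact p.Prime] (e : ℕ) (he : 1 ≤ e) (q : ℕ) (hq : q = p ^ e)
    (R : Type*) [CommRing R] [CharP R p] (n : ℕ) (hn : 1 ≤ n)
    (A : Matrix (Fin n) (Fin n) R) (hA : IsUnit A) :
    Ideal.Quotient.mk
        (Ideal.span (Set.range fun i : Fin n => (X i : MvPolynomial (Fin n) R) ^ q))
        (∏ i : Fin n, (∑ j : Fin n, C (A i j) * X j) ^ (q - 1)) =
      Ideal.Quotient.mk
        (Ideal.span (Set.range fun i : Fin n => (X i : MvPolynomial (Fin n) R) ^ q))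
        (C (A.det ^ (q - 1)) * ∏ i : Fin n, X i ^ (q - 1)) := by
  rw [Ideal.Quotient.mk_eq_mk_iff_sub_mem]
  exact good_all p e hq A
end
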